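/- Let ω = e^{2πi/3} ∈ ℂ, τ = ω + 2, and for k ≡ 11 (mod 12) let M_k = (τ^k − 1)/(τ − 1) ∈ ℂ. Then Re(M_k) = −1/2 and Im(M_k) = (√3 − 2·3^{k/2})/2; consequently the argument of M_k lies in the interval [−2π/3, −π/3) (i.e., M_k lies in the fifth sextant of the plane, so its complex conjugate lies in the second sextant). -/

import Mathlib

/-! Since `ω (τ - 1) = ω² + ω = -1`, we have `M_k = ω - ω τ^k`. The relation
`τ² = 3τ - 3` (`τ = √3 e^{iπ/6}`) gives `τ^12 = 3^6` and `ω τ^11 = 3^{11/2} i`, so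
`M_k = ω - 3^{k/2} i` for `k ≡ 11 (mod 12)`. This point has real part `-1/2` and lies strictly
below the ray of argument `-2π/3`; its negative has argument `arctan (Im / Re) ∈ (π/3, π/2)`,
hence `Arg M_k ∈ (-2π/3, -π/2)`. Conjugation negates the argument. -/

open Complex

/-- The primitive cube root of unity `ω = e^{2πi/3}`. -/
noncomputable def ω : ℂ := Complex.exp (2 * Real.pi * Complex.I / 3)

/-- `τ = ω + 2`. -/
noncomputable def τ : ℂ := ω + 2

/-- The `τ`-Mersenne number `M_k = (τ^k − 1)/(τ − 1)` as a complex number. -/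
noncomputable def M (k : ℕ) : ℂ := (τ ^ k - 1) / (τ - 1)

namespace Complex

theorem pi_div_three_lt_arg_of_sqrt_three_mul_re_lt_im {z : ℂ} (hre : 0 < z.re)
    (him : √3 * z.re < z.im) : Real.pi / 3 < arg z := by
  have harg : |arg z| < Real.pi / 2 := abs_arg_lt_pi_div_two_iff.2 (Or.inl hre)
  rw [← Real.arctan_sqrt_three, ← Real.arctan_tan (abs_lt.1 harg).1 (abs_lt.1 harg).2, tan_arg]
  exact Real.arctan_strictMono ((lt_div_iff₀ hre).2 him)

theorem arg_mem_Ioo_of_im_lt_sqrt_three_mul_re {z : ℂ} (hre : z.re < 0)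
    (him : z.im < √3 * z.re) : -(2 * Real.pi / 3) < arg z ∧ arg z < -(Real.pi / 3) := by
  have him_neg : z.im < 0 := him.trans (mul_neg_of_pos_of_neg (by positivity) hre)
  have hneg : arg (-z) = arg z + Real.pi := arg_neg_eq_arg_add_pi_of_im_neg him_neg
  have hlow : Real.pi / 3 < arg (-z) :=
    pi_div_three_lt_arg_of_sqrt_three_mul_re_lt_im (by simpa using hre) (by simpa using him)
  have hhigh : arg (-z) < Real.pi / 2 :=
    (abs_lt.1 (abs_arg_lt_pi_div_two_iff.2 (Or.inl (by simpa using hre)))).2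
  constructor <;> linarith [Real.pi_pos]

end Complex

theorem ω_eq : ω = -1 / 2 + √3 / 2 * I := by
  have h : 2 * Real.pi / 3 = Real.pi - Real.pi / 3 := by ring
  rw [ω, show 2 * (Real.pi : ℂ) * I / 3 = ((2 * Real.pi / 3 : ℝ) : ℂ) * I by push_cast; ring,
    exp_mul_I, ← ofReal_cos, ← ofReal_sin, h, Real.cos_pi_sub, Real.sin_pi_sub,
    Real.cos_pi_div_three, Real.sin_pi_div_three]
  push_cast
  ring

theorem ofReal_sqrt_three_sq : ((√3 : ℝ) : ℂ) ^ 2 = 3 := by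
  rw [← ofReal_pow, Real.sq_sqrt (by norm_num)]
  norm_num

theorem ω_mul_τ_sub_one : ω * (τ - 1) = -1 := by
  rw [τ, ω_eq]
  linear_combination (I ^ 2 / 4) * ofReal_sqrt_three_sq + (3 / 4 : ℂ) * I_sq

theorem τ_sq : τ ^ 2 = 3 * τ - 3 := by
  rw [τ, ω_eq]
  linear_combination (I ^ 2 / 4) * ofReal_sqrt_three_sq + (3 / 4 : ℂ) * I_sq

theorem τ_pow_six : τ ^ 6 = -27 := by
  linear_combination (τ ^ 4 + 3 * τ ^ 3 + 6 * τ ^ 2 + 9 * τ + 9) * τ_sq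

theorem τ_pow_twelve : τ ^ 12 = 729 := by
  linear_combination (τ ^ 6 - 27) * τ_pow_six

theorem ω_mul_τ_pow_eleven : ω * τ ^ 11 = 243 * √3 * I := by
  have h : τ ^ 11 = 729 - 243 * τ := by
    linear_combination τ ^ 5 * τ_pow_six - 27 * (τ ^ 3 + 3 * τ ^ 2 + 6 * τ + 9) * τ_sq
  rw [h, τ, ω_eq]
  linear_combination 243 * (-(I ^ 2 / 4) * ofReal_sqrt_three_sq - 3 / 4 * I_sq)

theorem M_eq_of_mod_twelve {k : ℕ} (hk : k % 12 = 11) :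
    M k = ω - ((√3 ^ k : ℝ) : ℂ) * I := by
  obtain ⟨m, rfl⟩ : ∃ m, k = 12 * m + 11 := ⟨k / 12, by omega⟩
  have hinv : (τ - 1)⁻¹ = -ω :=
    inv_eq_of_mul_eq_one_left (by rw [neg_mul, ω_mul_τ_sub_one, neg_neg])
  have hsqrt : √3 ^ (12 * m + 11) = (729 : ℝ) ^ m * (243 * √3) := by
    rw [pow_add, pow_mul, show √3 ^ 11 = (√3 ^ 2) ^ 5 * √3 by ring,
      show √3 ^ 12 = (√3 ^ 2) ^ 6 by ring, Real.sq_sqrt (by norm_num)]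
    norm_num
  rw [M, div_eq_mul_inv, hinv, hsqrt, pow_add, pow_mul, τ_pow_twelve]
  push_cast
  linear_combination -(729 : ℂ) ^ m * ω_mul_τ_pow_eleven

/-- For `k ≡ 11 (mod 12)`:
`Re M_k = −1/2`, `Im M_k = (√3 − 2·3^{k/2})/2`, so `Arg M_k ∈ [−2π/3, −π/3)`
(`M_k` lies in the fifth sextant) and `Arg M̄_k ∈ [π/3, 2π/3)` (its conjugate lies in
the second sextant). -/
theorem mersenne_fifth_sextant (k : ℕ) (hmod : k % 12 = 11) :
    (M k).re = -(1 / 2 : ℝ) ∧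
    (M k).im = (Real.sqrt 3 - 2 * (3 : ℝ) ^ ((k : ℝ) / 2)) / 2 ∧
    -(2 * Real.pi / 3) ≤ (M k).arg ∧ (M k).arg < -(Real.pi / 3) ∧
    Real.pi / 3 ≤ ((starRingEnd ℂ) (M k)).arg ∧
    ((starRingEnd ℂ) (M k)).arg < 2 * Real.pi / 3 := by
  have hM : M k = -1 / 2 + (√3 / 2 - √3 ^ k : ℝ) * I := by
    rw [M_eq_of_mod_twelve hmod, ω_eq]
    push_cast
    ring
  have hre : (M k).re = -(1 / 2) := by rw [hM, add_re, re_ofReal_mul]; norm_num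
  have him : (M k).im = √3 / 2 - √3 ^ k := by rw [hM, add_im, im_ofReal_mul]; norm_num
  have hsector : (M k).im < √3 * (M k).re := by
    have : √3 < √3 ^ k :=
      lt_self_pow₀ (Real.lt_sqrt (by norm_num) |>.2 (by norm_num)) (by omega)
    rw [hre, him]
    linarith
  obtain ⟨hlow, hhigh⟩ := arg_mem_Ioo_of_im_lt_sqrt_three_mul_re (by rw [hre]; norm_num) hsector
  have hconj : ((starRingEnd ℂ) (M k)).arg = -(M k).arg := by
    rw [arg_conj, if_neg (by linarith [Real.pi_pos])]
  refine ⟨hre, ?_, hlow.le, hhigh, by linarith, by linarith⟩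
  rw [him, Real.rpow_div_two_eq_sqrt _ (by norm_num), Real.rpow_natCast]
  ring
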